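/- arXiv:1101.2302 — 4 statements merged into one kernel-verified Lean document; each statement's English description precedes it below -/
import Mathlib

section
/- Let H be a Hilbert space and let (P_n) and (G_n) be sequences of pairwise orthogonal projections of finite rank in H such that ∑ P_n = I and ∑ G_n = I (in the strong operator topology) and ∑_{n=1}^∞ ‖P_n − G_n‖² < ∞. Then there exists N₀ ∈ ℕ such that for all N ≥ N₀, ∑_{n=1}^N rank P_n = ∑_{n=1}^N rank G_n. -/
/-!
Fix `N` with `∑_{n ≥ N} ‖P_n - G_n‖² < 1`. If `w = ∑_{n<N} w_n` with `w_n ∈ ran G_n` and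
`P_n w = 0` for all `n < N`, then `G_n w = 0` for `n ≥ N`, so `P_n w = (P_n - G_n) w` there and
Pythagoras gives `‖w‖² = ∑_{n ≥ N} ‖P_n w‖² ≤ (∑_{n ≥ N} ‖P_n - G_n‖²) ‖w‖²`, forcing `w = 0`.
Hence `(w_n)_{n<N} ↦ (P_n w)_{n<N}` is injective, so `∑_{n<N} rank G_n ≤ ∑_{n<N} rank P_n`;
the reverse inequality is the same argument with `P` and `G` swapped.
-/

open scoped InnerProductSpace
open Filter

section LinearAlgebra

variable {K V ι : Type*} [Field K] [AddCommGroup V] [Module K V]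

theorem sum_finrank_range_le_of_forall_eq_zero (s : Finset ι) (P G : ι → V →ₗ[K] V)
    [∀ i, FiniteDimensional K (LinearMap.range (P i))]
    [∀ i, FiniteDimensional K (LinearMap.range (G i))]
    (hG : ∀ i, IsIdempotentElem (G i)) (hGorth : ∀ i j, i ≠ j → G i ∘ₗ G j = 0)
    (h : ∀ w, (∀ i ∈ s, P i w = 0) → (∀ i ∉ s, G i w = 0) → w = 0) :
    ∑ i ∈ s, Module.finrank K (LinearMap.range (G i)) ≤
      ∑ i ∈ s, Module.finrank K (LinearMap.range (P i)) := by
  have hGdiag (i : ι) (y : LinearMap.range (G i)) : G i y = y := by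
    obtain ⟨y, z, rfl⟩ := y
    exact congrArg (· z) (hG i).eq
  have hGoff (i j : ι) (hij : i ≠ j) (y : LinearMap.range (G j)) : G i y = 0 := by
    obtain ⟨y, z, rfl⟩ := y
    exact congrArg (· z) (hGorth i j hij)
  let S : (∀ j : s, LinearMap.range (G j)) →ₗ[K] V :=
    ∑ j : s, (LinearMap.range (G j)).subtype ∘ₗ LinearMap.proj j
  have hGS (i : ι) (v : ∀ j : s, LinearMap.range (G j)) : G i (S v) = ∑ j : s, G i (v j) := by
    simp [S]
  let Φ : (∀ j : s, LinearMap.range (G j)) →ₗ[K] ∀ i : s, LinearMap.range (P i) :=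
    LinearMap.pi fun i => (P i).rangeRestrict ∘ₗ S
  have hΦ : Function.Injective Φ := by
    refine (injective_iff_map_eq_zero Φ).mpr fun v hv => ?_
    have hS : S v = 0 := by
      refine h _ (fun i hi => congrArg Subtype.val (congrFun hv ⟨i, hi⟩)) fun i hi => ?_
      rw [hGS]
      exact Finset.sum_eq_zero fun j _ => hGoff i j (fun hij => hi (hij ▸ j.2)) (v j)
    funext i
    have hvi := hGS i v
    rw [hS, map_zero, Finset.sum_eq_single i
      (fun j _ hji => hGoff i j (fun hij => hji (Subtype.ext hij.symm)) (v j)) (by simp),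
      hGdiag] at hvi
    exact Subtype.ext hvi.symm
  have hfinrank := LinearMap.finrank_le_finrank_of_injective hΦ
  rwa [Module.finrank_pi_fintype, Module.finrank_pi_fintype,
    Finset.sum_coe_sort s fun i => Module.finrank K (LinearMap.range (G i)),
    Finset.sum_coe_sort s fun i => Module.finrank K (LinearMap.range (P i))] at hfinrank

end LinearAlgebra

section Hilbert

variable {𝕜 E : Type*} [RCLike 𝕜] [NormedAddCommGroup E] [InnerProductSpace 𝕜 E] [CompleteSpace E]

theorem ContinuousLinearMap.IsStarProjection.re_inner_apply_self {p : E →L[𝕜] E}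
    (hp : IsStarProjection p) (x : E) : RCLike.re ⟪x, p x⟫_𝕜 = ‖p x‖ ^ 2 := by
  have hsymm : ⟪p x, p x⟫_𝕜 = ⟪x, p (p x)⟫_𝕜 := hp.isSelfAdjoint.isSymmetric x (p x)
  rw [← mul_apply_eq_comp, hp.isIdempotentElem.eq] at hsymm
  rw [← hsymm, inner_self_eq_norm_sq]

theorem hasSum_norm_sq_apply {ι : Type*} {P : ι → E →L[𝕜] E} (hP : ∀ i, IsStarProjection (P i))
    {x : E} (hx : HasSum (fun i => P i x) x) : HasSum (fun i => ‖P i x‖ ^ 2) (‖x‖ ^ 2) := by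
  simpa only [innerSL_apply_apply, RCLike.reCLM_apply,
    ContinuousLinearMap.IsStarProjection.re_inner_apply_self (hP _), inner_self_eq_norm_sq]
    using RCLike.reCLM.hasSum ((innerSL 𝕜 x).hasSum hx)

theorem eq_zero_of_tsum_norm_sub_sq_lt_one {P G : ℕ → E →L[𝕜] E}
    (hP : ∀ n, IsStarProjection (P n)) {w : E} (hw : HasSum (fun n => P n w) w) {N : ℕ}
    (hPw : ∀ n ∈ Finset.range N, P n w = 0) (hGw : ∀ n ∉ Finset.range N, G n w = 0)
    (hsq : Summable fun n => ‖P n - G n‖ ^ 2)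
    (htail : ∑' k, ‖P (k + N) - G (k + N)‖ ^ 2 < 1) : w = 0 := by
  have hshift : HasSum (fun k => ‖P (k + N) w‖ ^ 2) (‖w‖ ^ 2) := by
    have := (hasSum_nat_add_iff' N).mpr (hasSum_norm_sq_apply hP hw)
    rwa [Finset.sum_eq_zero fun n hn => by simp [hPw n hn], sub_zero] at this
  have hle (k : ℕ) : ‖P (k + N) w‖ ^ 2 ≤ ‖P (k + N) - G (k + N)‖ ^ 2 * ‖w‖ ^ 2 := by
    have hG : G (k + N) w = 0 := hGw _ (by simp)
    rw [← mul_pow, ← sub_zero (P (k + N) w), ← hG, ← sub_apply]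
    exact pow_le_pow_left₀ (norm_nonneg _) (ContinuousLinearMap.le_opNorm _ _) 2
  have hnorm_le := hasSum_le hle hshift (((summable_nat_add_iff N).mpr hsq).hasSum.mul_right _)
  have hnorm_sq : ‖w‖ ^ 2 ≤ 0 := by nlinarith [sq_nonneg ‖w‖]
  simpa using hnorm_sq

theorem sum_finrank_range_le_of_tsum_norm_sub_sq_lt_one {P G : ℕ → E →L[𝕜] E}
    (hP : ∀ n, IsStarProjection (P n)) (hG : ∀ n, IsIdempotentElem (G n))
    (hGorth : ∀ m n, m ≠ n → (G m).comp (G n) = 0)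
    [∀ n, FiniteDimensional 𝕜 (LinearMap.range (P n : E →ₗ[𝕜] E))]
    [∀ n, FiniteDimensional 𝕜 (LinearMap.range (G n : E →ₗ[𝕜] E))]
    (hPsum : ∀ x, HasSum (fun n => P n x) x) (hsq : Summable fun n => ‖P n - G n‖ ^ 2)
    {N : ℕ} (htail : ∑' k, ‖P (k + N) - G (k + N)‖ ^ 2 < 1) :
    ∑ n ∈ Finset.range N, Module.finrank 𝕜 (LinearMap.range (G n : E →ₗ[𝕜] E)) ≤
      ∑ n ∈ Finset.range N, Module.finrank 𝕜 (LinearMap.range (P n : E →ₗ[𝕜] E)) :=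
  sum_finrank_range_le_of_forall_eq_zero _ _ _
    (fun n => ContinuousLinearMap.IsIdempotentElem.toLinearMap (hG n))
    (fun m n hmn => congrArg ContinuousLinearMap.toLinearMap (hGorth m n hmn))
    fun w hPw hGw => eq_zero_of_tsum_norm_sub_sq_lt_one hP (hPsum w) hPw hGw hsq htail

end Hilbert

/-- Let `(P n)` and `(G n)` be sequences of pairwise orthogonal finite-rank orthogonal
projections in a complex Hilbert space `H`, each summing strongly to the identity, with
`∑ ‖P n − G n‖² < ∞`. Then there is `N₀` such that for all `N ≥ N₀`,
`∑_{n<N} rank (P n) = ∑_{n<N} rank (G n)`. -/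
theorem rank_sums_eventually_equal
    {H : Type*} [NormedAddCommGroup H] [InnerProductSpace ℂ H] [CompleteSpace H]
    (P G : ℕ → H →L[ℂ] H)
    (hPproj : ∀ n, IsSelfAdjoint (P n) ∧ IsIdempotentElem (P n))
    (hGproj : ∀ n, IsSelfAdjoint (G n) ∧ IsIdempotentElem (G n))
    (hPorth : ∀ m n, m ≠ n → (P m).comp (P n) = 0)
    (hGorth : ∀ m n, m ≠ n → (G m).comp (G n) = 0)
    (hPfin : ∀ n, FiniteDimensional ℂ (LinearMap.range (P n : H →ₗ[ℂ] H)))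
    (hGfin : ∀ n, FiniteDimensional ℂ (LinearMap.range (G n : H →ₗ[ℂ] H)))
    (hPsum : ∀ x : H, HasSum (fun n => P n x) x)
    (hGsum : ∀ x : H, HasSum (fun n => G n x) x)
    (hsq : Summable (fun n => ‖P n - G n‖ ^ 2)) :
    ∃ N₀ : ℕ, ∀ N ≥ N₀,
      ∑ n ∈ Finset.range N, Module.finrank ℂ (LinearMap.range (P n : H →ₗ[ℂ] H)) =
        ∑ n ∈ Finset.range N, Module.finrank ℂ (LinearMap.range (G n : H →ₗ[ℂ] H)) := by
  have hP (n : ℕ) : IsStarProjection (P n) := ⟨(hPproj n).2, (hPproj n).1⟩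
  have hG (n : ℕ) : IsStarProjection (G n) := ⟨(hGproj n).2, (hGproj n).1⟩
  have hsq' : Summable fun n => ‖G n - P n‖ ^ 2 := by simpa only [norm_sub_rev] using hsq
  obtain ⟨N₀, hN₀⟩ := eventually_atTop.mp <|
    (tendsto_sum_nat_add fun n => ‖P n - G n‖ ^ 2).eventually_lt_const one_pos
  refine ⟨N₀, fun N hN => le_antisymm ?_ ?_⟩
  · refine sum_finrank_range_le_of_tsum_norm_sub_sq_lt_one hG (fun n => (hP n).isIdempotentElem)
      hPorth hGsum hsq' ?_
    simpa only [norm_sub_rev] using hN₀ N hN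
  · exact sum_finrank_range_le_of_tsum_norm_sub_sq_lt_one hP (fun n => (hG n).isIdempotentElem)
      hGorth hPsum hsq (hN₀ N hN)
end

section
/- Let H be a Hilbert space, (A_j)_{j≥1} a sequence of bounded operators on H and (G_j)_{j≥1} a sequence of pairwise orthogonal projections such that: (i) ∑ A_j converges in the strong operator topology to an operator A; (ii) the orthogonal projection G := I − ∑ G_j has finite rank; (iii) ∑_{j≥1} ‖A_j − G_j‖² < 1 and rank A_j ≤ rank G_j < ∞ for all j. Then codim(Ran A) ≥ rank G. -/
/-!
The operator `D = ∑ⱼ (Aⱼ - Gⱼ) Gⱼ` converges strongly and, by Cauchy–Schwarz and Bessel's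
inequality, has norm at most `(∑ⱼ ‖Aⱼ - Gⱼ‖²)^(1/2) < 1`. Hence `U = 1 + D` is invertible, and
`U = Aⱼ` on `Ran Gⱼ`. As `‖Aⱼ - Gⱼ‖ < 1`, `Aⱼ` is injective on `Ran Gⱼ`, so the rank condition
forces `Aⱼ (Ran Gⱼ) = Ran Aⱼ`. Therefore every `Ran Aⱼ`, and with it the closure of `Ran A`, lies in
the closed subspace `U (ker G)`. Its orthogonal complement contains `(U⁻¹)* (ker G)ᗮ`, and
`(ker G)ᗮ ⊇ Ran G` because `G` is self-adjoint.
-/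

open ContinuousLinearMap Module

theorem isStarProjection_sum {R ι : Type*} [NonUnitalSemiring R] [StarRing R] {p : ι → R}
    (hp : ∀ i, IsStarProjection (p i)) (horth : Pairwise fun i j => p i * p j = 0)
    (s : Finset ι) : IsStarProjection (∑ i ∈ s, p i) := by
  classical
  induction s using Finset.induction_on with
  | empty => simp [IsStarProjection.zero]
  | insert j s hj ih =>
    rw [Finset.sum_insert hj, add_comm]
    refine ih.add (hp j) ?_
    rw [Finset.sum_mul]
    exact Finset.sum_eq_zero fun i hi => horth (ne_of_mem_of_not_mem hi hj)

theorem hasSum_apply_apply_of_mem_range {R M N ι : Type*} [Semiring R] [AddCommMonoid M]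
    [Module R M] [TopologicalSpace M] [AddCommMonoid N] [Module R N] [TopologicalSpace N]
    {p : ι → M →L[R] M} (hp : ∀ i, IsIdempotentElem (p i))
    (horth : Pairwise fun i j => p i * p j = 0) (T : ι → M →L[R] N) {k : ι} {u : M}
    (hu : u ∈ LinearMap.range (p k : M →ₗ[R] M)) : HasSum (fun i => T i (p i u)) (T k u) := by
  obtain ⟨w, rfl⟩ := hu
  convert hasSum_single k fun i hi => ?_ using 1
  · simp only [ContinuousLinearMap.coe_coe, ← mul_apply_eq_comp, (hp k).eq]
  · simp only [ContinuousLinearMap.coe_coe, ← mul_apply_eq_comp, horth hi, zero_apply, map_zero]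

theorem topologicalClosure_range_le_of_hasSum {R M N ι : Type*} [Semiring R] [AddCommMonoid M]
    [Module R M] [TopologicalSpace M] [AddCommMonoid N] [Module R N] [TopologicalSpace N]
    [ContinuousAdd N] [ContinuousConstSMul R N]
    {A : ι → M →L[R] N} {S : M →L[R] N} (hS : ∀ x, HasSum (fun i => A i x) (S x))
    {K : Submodule R N} (hK : IsClosed (K : Set N))
    (hA : ∀ i, LinearMap.range (A i : M →ₗ[R] N) ≤ K) :
    (LinearMap.range (S : M →ₗ[R] N)).topologicalClosure ≤ K := by
  refine Submodule.topologicalClosure_minimal _ ?_ hK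
  rintro _ ⟨x, rfl⟩
  exact hK.mem_of_tendsto (hS x) (Filter.Eventually.of_forall fun s =>
    K.sum_mem fun i _ => hA i ⟨x, rfl⟩)

section Normed

variable {𝕜 E F : Type*} [NontriviallyNormedField 𝕜] [NormedAddCommGroup E] [NormedSpace 𝕜 E]
  [NormedAddCommGroup F] [NormedSpace 𝕜 F]

theorem ContinuousLinearMap.exists_hasSum_apply_of_sum_norm_le [CompleteSpace F] {ι : Type*}
    (T : ι → E →L[𝕜] F) {c : ℝ} (hc : 0 ≤ c)
    (hT : ∀ x (s : Finset ι), ∑ j ∈ s, ‖T j x‖ ≤ c * ‖x‖) :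
    ∃ D : E →L[𝕜] F, ‖D‖ ≤ c ∧ ∀ x, HasSum (fun j => T j x) (D x) := by
  have hnorm x : Summable fun j => ‖T j x‖ := summable_of_sum_le (fun _ => norm_nonneg _) (hT x)
  have hsum x : Summable fun j => T j x := (hnorm x).of_norm
  let D : E →ₗ[𝕜] F :=
    { toFun x := ∑' j, T j x
      map_add' x y := by simp only [map_add, (hsum x).tsum_add (hsum y)]
      map_smul' a x := by simp only [map_smul, (hsum x).tsum_const_smul a, RingHom.id_apply] }
  have hD x : ‖D x‖ ≤ c * ‖x‖ :=
    (norm_tsum_le_tsum_norm (hnorm x)).trans ((hnorm x).tsum_le_of_sum_le (hT x))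
  exact ⟨D.mkContinuous c hD, D.mkContinuous_norm_le hc hD, fun x => (hsum x).hasSum⟩

theorem ContinuousLinearMap.injective_comp_subtype_of_norm_sub_lt_one {A P : E →L[𝕜] E}
    (hP : IsIdempotentElem P) (hAP : ‖A - P‖ < 1) :
    Function.Injective ((A : E →ₗ[𝕜] E) ∘ₗ (LinearMap.range (P : E →ₗ[𝕜] E)).subtype) := by
  rw [← LinearMap.ker_eq_bot, LinearMap.ker_eq_bot']
  rintro ⟨v, hv⟩ hAv
  have hPv : P v = v := (LinearMap.IsIdempotentElem.mem_range_iff hP.toLinearMap).mp hv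
  have hAv : A v = 0 := hAv
  have hle : ‖v‖ ≤ ‖A - P‖ * ‖v‖ := by
    simpa [hAv, hPv] using (A - P).le_opNorm v
  have hv0 : ‖v‖ = 0 := by nlinarith [norm_nonneg v]
  exact Subtype.ext (norm_eq_zero.mp hv0)

theorem ContinuousLinearMap.map_range_eq_range_of_norm_sub_lt_one {A P : E →L[𝕜] E}
    (hP : IsIdempotentElem P) (hAP : ‖A - P‖ < 1)
    [FiniteDimensional 𝕜 (LinearMap.range (P : E →ₗ[𝕜] E))]
    [FiniteDimensional 𝕜 (LinearMap.range (A : E →ₗ[𝕜] E))]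
    (hrank : finrank 𝕜 (LinearMap.range (A : E →ₗ[𝕜] E)) ≤
      finrank 𝕜 (LinearMap.range (P : E →ₗ[𝕜] E))) :
    (LinearMap.range (P : E →ₗ[𝕜] E)).map (A : E →ₗ[𝕜] E) = LinearMap.range (A : E →ₗ[𝕜] E) := by
  have hmap : (LinearMap.range (P : E →ₗ[𝕜] E)).map (A : E →ₗ[𝕜] E) =
      LinearMap.range ((A : E →ₗ[𝕜] E) ∘ₗ (LinearMap.range (P : E →ₗ[𝕜] E)).subtype) := by
    rw [LinearMap.range_comp, Submodule.range_subtype]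
  refine Submodule.eq_of_le_of_finrank_le LinearMap.map_le_range ?_
  rw [hmap, LinearMap.finrank_range_of_inj (injective_comp_subtype_of_norm_sub_lt_one hP hAP)]
  exact hrank

end Normed

section InnerProductSpace

variable {𝕜 E F : Type*} [RCLike 𝕜] [NormedAddCommGroup E] [InnerProductSpace 𝕜 E]
  [CompleteSpace E] [NormedAddCommGroup F] [NormedSpace 𝕜 F]

theorem IsStarProjection.inner_apply_self {p : E →L[𝕜] E} (hp : IsStarProjection p) (x : E) :
    inner 𝕜 (p x) x = (‖p x‖ : 𝕜) ^ 2 := by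
  have hadj : adjoint p = p := hp.isSelfAdjoint
  conv_lhs => rw [← hp.isIdempotentElem.eq, mul_apply_eq_comp, ← hadj, adjoint_inner_left, hadj]
  exact inner_self_eq_norm_sq_to_K _

theorem sum_norm_sq_apply_le_of_pairwise_mul_eq_zero {ι : Type*} {p : ι → E →L[𝕜] E}
    (hp : ∀ i, IsStarProjection (p i)) (horth : Pairwise fun i j => p i * p j = 0)
    (x : E) (s : Finset ι) : ∑ i ∈ s, ‖p i x‖ ^ 2 ≤ ‖x‖ ^ 2 := by
  have hP := isStarProjection_sum hp horth s
  have hsum : ∑ i ∈ s, ‖p i x‖ ^ 2 = ‖(∑ i ∈ s, p i) x‖ ^ 2 := by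
    have : (∑ i ∈ s, (‖p i x‖ : 𝕜) ^ 2) = (‖(∑ i ∈ s, p i) x‖ : 𝕜) ^ 2 := by
      simp_rw [← IsStarProjection.inner_apply_self (hp _), ← hP.inner_apply_self, sum_apply,
        sum_inner]
    exact_mod_cast this
  rw [hsum]
  gcongr
  simpa using (∑ i ∈ s, p i).le_of_opNorm_le (IsStarProjection.norm_le _ hP) x

theorem sum_norm_apply_apply_le {ι : Type*} {p : ι → E →L[𝕜] E}
    (hp : ∀ i, IsStarProjection (p i)) (horth : Pairwise fun i j => p i * p j = 0)
    {T : ι → E →L[𝕜] F} (hT : Summable fun i => ‖T i‖ ^ 2) (x : E) (s : Finset ι) :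
    ∑ i ∈ s, ‖T i (p i x)‖ ≤ √(∑' i, ‖T i‖ ^ 2) * ‖x‖ :=
  calc ∑ i ∈ s, ‖T i (p i x)‖ ≤ ∑ i ∈ s, ‖T i‖ * ‖p i x‖ :=
        Finset.sum_le_sum fun i _ => (T i).le_opNorm _
    _ ≤ √(∑ i ∈ s, ‖T i‖ ^ 2) * √(∑ i ∈ s, ‖p i x‖ ^ 2) := Real.sum_mul_le_sqrt_mul_sqrt _ _ _
    _ ≤ √(∑' i, ‖T i‖ ^ 2) * √(‖x‖ ^ 2) := by
        gcongr
        · exact hT.sum_le_tsum s fun i _ => by positivity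
        · exact sum_norm_sq_apply_le_of_pairwise_mul_eq_zero hp horth x s
    _ = √(∑' i, ‖T i‖ ^ 2) * ‖x‖ := by rw [Real.sqrt_sq (norm_nonneg x)]

theorem exists_units_apply_eq_of_mem_range {ι : Type*} {p : ι → E →L[𝕜] E}
    (hp : ∀ i, IsStarProjection (p i)) (horth : Pairwise fun i j => p i * p j = 0)
    (A : ι → E →L[𝕜] E) (hsq : Summable fun i => ‖A i - p i‖ ^ 2)
    (hlt : ∑' i, ‖A i - p i‖ ^ 2 < 1) :
    ∃ U : (E →L[𝕜] E)ˣ,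
      ∀ k, ∀ u ∈ LinearMap.range (p k : E →ₗ[𝕜] E), (U : E →L[𝕜] E) u = A k u := by
  obtain ⟨D, hD, hDsum⟩ := exists_hasSum_apply_of_sum_norm_le (fun i => (A i - p i) * p i)
    (Real.sqrt_nonneg _) (sum_norm_apply_apply_le hp horth hsq)
  have hD_lt : ‖-D‖ < 1 := by
    rw [norm_neg]
    exact hD.trans_lt ((Real.sqrt_lt' one_pos).mpr (by rwa [one_pow]))
  refine ⟨Units.oneSub (-D) hD_lt, fun k u hu => ?_⟩
  have hpu : p k u = u :=
    (LinearMap.IsIdempotentElem.mem_range_iff (hp k).isIdempotentElem.toLinearMap).mp hu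
  have hDu : D u = A k u - u := by
    rw [(hDsum u).unique (hasSum_apply_apply_of_mem_range (fun i => (hp i).isIdempotentElem) horth
      (fun i => A i - p i) hu), sub_apply, hpu]
  simp [hDu]

theorem IsSelfAdjoint.range_le_orthogonal_ker {T : E →L[𝕜] E} (hT : IsSelfAdjoint T) :
    LinearMap.range (T : E →ₗ[𝕜] E) ≤ (LinearMap.ker (T : E →ₗ[𝕜] E))ᗮ := by
  have hker : (LinearMap.range (T : E →ₗ[𝕜] E))ᗮ = LinearMap.ker (T : E →ₗ[𝕜] E) := by
    simpa only [hT.adjoint_eq] using T.orthogonal_range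
  exact hker ▸ Submodule.le_orthogonal_orthogonal _

theorem rank_orthogonal_le_rank_orthogonal_map (U : (E →L[𝕜] E)ˣ) (K : Submodule 𝕜 E) :
    Module.rank 𝕜 Kᗮ ≤ Module.rank 𝕜 (K.map ((U : E →L[𝕜] E) : E →ₗ[𝕜] E))ᗮ := by
  set V : E →L[𝕜] E := adjoint ((U⁻¹ : (E →L[𝕜] E)ˣ) : E →L[𝕜] E)
  have hV : Function.LeftInverse (adjoint (U : E →L[𝕜] E)) V := fun y => by
    simp only [V, ← star_eq_adjoint, ← mul_apply_eq_comp, ← star_mul, U.inv_mul, star_one,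
      one_apply_eq_self]
  have hle : Kᗮ.map (V : E →ₗ[𝕜] E) ≤ (K.map ((U : E →L[𝕜] E) : E →ₗ[𝕜] E))ᗮ := by
    rintro _ ⟨y, hy, rfl⟩
    rw [Submodule.mem_orthogonal]
    rintro _ ⟨k, hk, rfl⟩
    simp only [ContinuousLinearMap.coe_coe, V, adjoint_inner_right, ← mul_apply_eq_comp,
      U.inv_mul]
    exact Submodule.inner_right_of_mem_orthogonal hk hy
  calc Module.rank 𝕜 Kᗮ = Module.rank 𝕜 (Kᗮ.map (V : E →ₗ[𝕜] E)) :=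
        (rank_map_eq hV.injective _).symm
    _ ≤ _ := Submodule.rank_mono hle

end InnerProductSpace

theorem codim_range_ge_rank_general
    {H : Type*} [NormedAddCommGroup H] [InnerProductSpace ℂ H] [CompleteSpace H]
    (A G : ℕ → H →L[ℂ] H) (Aop Gop : H →L[ℂ] H)
    (hAsum : ∀ x : H, HasSum (fun j => A j x) (Aop x))
    (hGproj : ∀ j, IsSelfAdjoint (G j) ∧ IsIdempotentElem (G j))
    (hGorth : ∀ j k, j ≠ k → (G j).comp (G k) = 0)
    (hGfin : ∀ j, FiniteDimensional ℂ (LinearMap.range (G j : H →ₗ[ℂ] H)))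
    (hGsum : ∀ x : H, HasSum (fun j => G j x) (x - Gop x))
    (hGopproj : IsSelfAdjoint Gop ∧ IsIdempotentElem Gop)
    (hsq : Summable (fun j => ‖A j - G j‖ ^ 2))
    (hsq1 : ∑' j, ‖A j - G j‖ ^ 2 < 1)
    (hAfin : ∀ j, FiniteDimensional ℂ (LinearMap.range (A j : H →ₗ[ℂ] H)))
    (hrank : ∀ j, Module.finrank ℂ (LinearMap.range (A j : H →ₗ[ℂ] H)) ≤
      Module.finrank ℂ (LinearMap.range (G j : H →ₗ[ℂ] H))) :
    (Module.finrank ℂ (LinearMap.range (Gop : H →ₗ[ℂ] H)) : Cardinal) ≤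
      Module.rank ℂ (((LinearMap.range (Aop : H →ₗ[ℂ] H)).topologicalClosure)ᗮ : Submodule ℂ H) := by
  have hG j : IsStarProjection (G j) := ⟨(hGproj j).2, (hGproj j).1⟩
  have hGorth' : Pairwise fun j k => G j * G k = 0 := fun j k hjk => hGorth j k hjk
  obtain ⟨U, hU⟩ := exists_units_apply_eq_of_mem_range hG hGorth' A hsq hsq1
  set K := LinearMap.ker (Gop : H →ₗ[ℂ] H)
  have hGK k : LinearMap.range (G k : H →ₗ[ℂ] H) ≤ K := fun u hu => by
    have h := hasSum_apply_apply_of_mem_range (fun j => (hG j).isIdempotentElem) hGorth'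
      (fun _ => (1 : H →L[ℂ] H)) hu
    exact LinearMap.mem_ker.mpr (by simpa using (hGsum u).unique h)
  have hAK k : LinearMap.range (A k : H →ₗ[ℂ] H) ≤ K.map (U : H →ₗ[ℂ] H) := by
    have := hGfin k
    have := hAfin k
    have hAG : ‖A k - G k‖ < 1 := by
      have hle := hsq.le_tsum k fun j _ => sq_nonneg _
      nlinarith [norm_nonneg (A k - G k)]
    rw [← (A k).map_range_eq_range_of_norm_sub_lt_one (hG k).isIdempotentElem hAG (hrank k)]
    rintro _ ⟨u, hu, rfl⟩
    exact ⟨u, hGK k hu, hU k u hu⟩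
  have hKU : IsClosed (K.map (U : H →ₗ[ℂ] H) : Set H) :=
    (ContinuousLinearEquiv.unitsEquiv ℂ H U).isClosed_image.mpr Gop.isClosed_ker
  calc (Module.finrank ℂ (LinearMap.range (Gop : H →ₗ[ℂ] H)) : Cardinal)
      ≤ Module.rank ℂ (LinearMap.range (Gop : H →ₗ[ℂ] H)) := Cardinal.natCast_toNat_le _
    _ ≤ Module.rank ℂ Kᗮ := Submodule.rank_mono hGopproj.1.range_le_orthogonal_ker
    _ ≤ Module.rank ℂ (K.map (U : H →ₗ[ℂ] H))ᗮ := rank_orthogonal_le_rank_orthogonal_map U K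
    _ ≤ _ := Submodule.rank_mono
        (Submodule.orthogonal_le (topologicalClosure_range_le_of_hasSum hAsum hKU hAK))

/-- Let `(A j)` be a sequence of bounded operators on a complex Hilbert space `H` whose
sum converges strongly to `A`, and `(G j)` a sequence of pairwise orthogonal finite-rank
orthogonal projections such that the orthogonal projection `G = I − ∑ G j` has finite
rank, `∑ ‖A j − G j‖² < 1` and `rank (A j) ≤ rank (G j) < ∞` for all `j`. Then
`codim (Ran A) ≥ rank G`. -/
theorem codim_range_ge_rank
    {H : Type*} [NormedAddCommGroup H] [InnerProductSpace ℂ H] [CompleteSpace H]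
    (A G : ℕ → H →L[ℂ] H) (Aop Gop : H →L[ℂ] H)
    (hAsum : ∀ x : H, HasSum (fun j => A j x) (Aop x))
    (hGproj : ∀ j, IsSelfAdjoint (G j) ∧ IsIdempotentElem (G j))
    (hGorth : ∀ j k, j ≠ k → (G j).comp (G k) = 0)
    (hGfin : ∀ j, FiniteDimensional ℂ (LinearMap.range (G j : H →ₗ[ℂ] H)))
    (hGsum : ∀ x : H, HasSum (fun j => G j x) (x - Gop x))
    (hGopproj : IsSelfAdjoint Gop ∧ IsIdempotentElem Gop)
    (hGopfin : FiniteDimensional ℂ (LinearMap.range (Gop : H →ₗ[ℂ] H)))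
    (hsq : Summable (fun j => ‖A j - G j‖ ^ 2))
    (hsq1 : ∑' j, ‖A j - G j‖ ^ 2 < 1)
    (hAfin : ∀ j, FiniteDimensional ℂ (LinearMap.range (A j : H →ₗ[ℂ] H)))
    (hrank : ∀ j, Module.finrank ℂ (LinearMap.range (A j : H →ₗ[ℂ] H)) ≤
      Module.finrank ℂ (LinearMap.range (G j : H →ₗ[ℂ] H))) :
    (Module.finrank ℂ (LinearMap.range (Gop : H →ₗ[ℂ] H)) : Cardinal) ≤
      Module.rank ℂ (((LinearMap.range (Aop : H →ₗ[ℂ] H)).topologicalClosure)ᗮ : Submodule ℂ H) :=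
  codim_range_ge_rank_general A G Aop Gop hAsum hGproj hGorth hGfin hGsum hGopproj hsq hsq1 hAfin
    hrank
end

section
/- Let H be a Hilbert space and {A_j}_{j=0}^n a finite set of self-adjoint bounded operators on H with A_j of finite rank for j ≠ 0. If ∑_{j=0}^n A_j = I and ∑_{j=1}^n rank A_j ≤ codim(Ran A_0), then each A_j is an orthogonal projection and A_j A_k = 0 for j ≠ k. -/
/-!
Let `K = (Ran A₀)ᗮ = ker A₀`. On `K` the operators `A j`, `j ≠ 0`, sum to the identity, so `K` lies
in the span of their ranges. As `dim span ≤ ∑ rank A j ≤ dim K`, the rank hypothesis forces `K` to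
be that span and the ranges to be independent. Decomposing `y = A k x ∈ K` both as `∑ A j y` and
as `y` itself then gives `A j A k = δ_{jk} A k`. Moreover `A₀` kills `K ⊇ Ran A k`, and `A k A₀ = (A₀ A k)* = 0`. Pairwise
orthogonality together with `∑ A j = 1` makes every `A j` idempotent.
-/

open Module

section FiniteFamily

variable {ι 𝕜 M : Type*} [Fintype ι] [DivisionRing 𝕜] [AddCommGroup M] [Module 𝕜 M]

theorem Submodule.finrank_iSup_add_finrank_ker_lsum [DecidableEq ι] (p : ι → Submodule 𝕜 M)
    [∀ i, FiniteDimensional 𝕜 (p i)] :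
    finrank 𝕜 (⨆ i, p i : Submodule 𝕜 M) +
        finrank 𝕜 (LinearMap.ker (DFinsupp.lsum ℕ fun i => (p i).subtype)) =
      ∑ i, finrank 𝕜 (p i) := by
  rw [Submodule.iSup_eq_range_dfinsupp_lsum, LinearMap.finrank_range_add_finrank_ker]
  exact finrank_directSum 𝕜 _

theorem Submodule.finrank_iSup_le_sum (p : ι → Submodule 𝕜 M) [∀ i, FiniteDimensional 𝕜 (p i)] :
    finrank 𝕜 (⨆ i, p i : Submodule 𝕜 M) ≤ ∑ i, finrank 𝕜 (p i) := by
  classical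
  exact (Submodule.finrank_iSup_add_finrank_ker_lsum p).symm ▸ Nat.le_add_right _ _

theorem iSupIndep_of_sum_finrank_le_finrank_iSup (p : ι → Submodule 𝕜 M)
    [∀ i, FiniteDimensional 𝕜 (p i)]
    (h : ∑ i, finrank 𝕜 (p i) ≤ finrank 𝕜 (⨆ i, p i : Submodule 𝕜 M)) : iSupIndep p := by
  classical
  have hker := Submodule.finrank_iSup_add_finrank_ker_lsum p
  refine iSupIndep_of_dfinsupp_lsum_injective p (LinearMap.ker_eq_bot.mp ?_)
  exact Submodule.finrank_eq_zero.mp (by omega)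

variable (f : ι → M →ₗ[𝕜] M)

theorem LinearMap.apply_apply_eq_ite_of_iSupIndep_range [DecidableEq ι]
    (hf : iSupIndep fun i => range (f i)) (hsum : ∀ j x, ∑ i, f i (f j x) = f j x)
    (i j : ι) (x : M) : f i (f j x) = if i = j then f j x else 0 := by
  have hdecomp := (iSupIndep_iff_finsetSum_eq_imp_eq _).mp hf Finset.univ
    (fun i => f i (f j x)) (Pi.single j (f j x)) (fun i _ => ⟨mem_range_self _ _, ?_⟩)
    (by rw [hsum, Finset.sum_pi_single', if_pos (Finset.mem_univ j)]) i (Finset.mem_univ i)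
  · rw [hdecomp, Pi.single_apply]
  · rcases eq_or_ne i j with rfl | hij
    · simp
    · simp [hij]

theorem LinearMap.iSup_range_eq_and_iSupIndep_of_sum_finrank_le
    [∀ i, FiniteDimensional 𝕜 (range (f i))] (W : Submodule 𝕜 M) (hW : ∀ x ∈ W, ∑ i, f i x = x)
    (hrank : ((∑ i, finrank 𝕜 (range (f i)) : ℕ) : Cardinal) ≤ Module.rank 𝕜 W) :
    (⨆ i, range (f i)) = W ∧ iSupIndep fun i => range (f i) := by
  have hle : W ≤ ⨆ i, range (f i) := fun x hx =>
    hW x hx ▸ Submodule.sum_mem _ fun i _ => Submodule.mem_iSup_of_mem i (mem_range_self _ x)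
  have : FiniteDimensional 𝕜 W := Submodule.finiteDimensional_of_le hle
  rw [← finrank_eq_rank, Nat.cast_le] at hrank
  have hsup := Submodule.finrank_iSup_le_sum fun i => range (f i)
  have hW_le := Submodule.finrank_mono hle
  exact ⟨(Submodule.eq_of_le_of_finrank_le hle (hsup.trans hrank)).symm,
    iSupIndep_of_sum_finrank_le_finrank_iSup _ (hrank.trans hW_le)⟩

end FiniteFamily

theorem LinearMap.IsSymmetric.orthogonal_closure_range {𝕜 E : Type*} [RCLike 𝕜]
    [NormedAddCommGroup E] [InnerProductSpace 𝕜 E] {T : E →ₗ[𝕜] E} (hT : T.IsSymmetric) :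
    (range T).topologicalClosureᗮ = ker T := by
  rw [Submodule.orthogonal_closure, hT.orthogonal_range]

/-- Let `{A j}_{j=0}^n` be self-adjoint bounded operators on a complex Hilbert space,
with `A j` of finite rank for `j ≠ 0`. If `∑ A j = I` and
`∑_{j≠0} rank (A j) ≤ codim (Ran (A 0))`, then the `A j` are pairwise orthogonal
projections. -/
theorem selfadjoint_family_orthogonal_projections
    {H : Type*} [NormedAddCommGroup H] [InnerProductSpace ℂ H] [CompleteSpace H]
    {n : ℕ} (A : Fin (n + 1) → H →L[ℂ] H)
    (hsa : ∀ j, IsSelfAdjoint (A j))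
    (hfin : ∀ j, j ≠ 0 → FiniteDimensional ℂ (LinearMap.range (A j : H →ₗ[ℂ] H)))
    (hsum : ∑ j, A j = 1)
    (hrank : ((∑ j ∈ Finset.univ.erase 0, Module.finrank ℂ (LinearMap.range (A j : H →ₗ[ℂ] H)) : ℕ) :
        Cardinal) ≤
      Module.rank ℂ (((LinearMap.range (A 0 : H →ₗ[ℂ] H)).topologicalClosure)ᗮ : Submodule ℂ H)) :
    (∀ j, IsIdempotentElem (A j)) ∧ ∀ j k, j ≠ k → (A j).comp (A k) = 0 := by
  let f (j : {j : Fin (n + 1) // j ≠ 0}) : H →ₗ[ℂ] H := A j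
  have : ∀ j, FiniteDimensional ℂ (LinearMap.range (f j)) := fun j => hfin j j.2
  rw [(hsa 0).isSymmetric.orthogonal_closure_range,
    Finset.sum_subtype (p := (· ≠ 0)) _ (fun j => by simp)] at hrank
  have hW : ∀ x ∈ LinearMap.ker (A 0 : H →ₗ[ℂ] H), ∑ j, f j x = x := by
    intro x (hx : A 0 x = 0)
    have := congr($hsum x)
    rwa [sum_apply, Fintype.sum_eq_add_sum_subtype_ne _ 0, hx, zero_add] at this
  obtain ⟨hrange, hindep⟩ :=
    LinearMap.iSup_range_eq_and_iSupIndep_of_sum_finrank_le f _ hW hrank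
  have hmem_ker (j) (x : H) : f j x ∈ LinearMap.ker (A 0 : H →ₗ[ℂ] H) :=
    hrange ▸ Submodule.mem_iSup_of_mem j (LinearMap.mem_range_self _ x)
  have hA0 (j : {j : Fin (n + 1) // j ≠ 0}) : A 0 * A j = 0 :=
    ContinuousLinearMap.ext (hmem_ker j)
  have hortho : Pairwise fun j k => A j * A k = 0 := by
    intro j k hjk
    rcases eq_or_ne j 0 with rfl | hj
    · exact hA0 ⟨k, hjk.symm⟩
    rcases eq_or_ne k 0 with rfl | hk
    · have h := hA0 ⟨j, hj⟩
      exact ((hsa 0).commute_of_mul_eq_zero (hsa j) h).symm.eq.trans h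
    ext x
    simpa [f, hjk] using LinearMap.apply_apply_eq_ite_of_iSupIndep_range f hindep
      (fun k x => hW _ (hmem_ker k x)) ⟨j, hj⟩ ⟨k, hk⟩ x
  have hcoi := CompleteOrthogonalIdempotents.iff_ortho_complete.mpr ⟨hortho, hsum⟩
  exact ⟨hcoi.idem, fun j k hjk => hcoi.ortho hjk⟩
end

section
/- Let H ∈ L²((−1,1), M_r(ℂ)) with H(−x) = H(x)* a.e., and define F_H(x,t) as the 2r×2r block matrix (1/2)·[[H((x−t)/2), H((x+t)/2)],[H^♯((x+t)/2), H^♯((x−t)/2)]] where H^♯(x) = H(−x). Let 𝓕_H be the integral operator on L²((0,1), ℂ^{2r}) with kernel F_H and 𝓗 the integral operator on L²((0,1), ℂ^r) with kernel H(x−t). Define V : L²((0,1), ℂ^{2r}) → L²((0,1), ℂ^r) by (Vf)(t) = √2 f₂(1−2t) for t ∈ (0,1/2] and (Vf)(t) = √2 f₁(2t−1) for t ∈ (1/2,1). Then V is unitary and I + 𝓗 = V (I + 𝓕_H) V⁻¹. -/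
/-!
The substitutions `t = (1 - s) / 2` and `t = (1 + s) / 2` map `(0,1)` onto its two halves with
Jacobian `1/2`, and `V` is composition with them scaled by `√2`. Hence
`∫₀¹ φ = ½ ∫₀¹ (φ((1 - s)/2) + φ((1 + s)/2))` makes `V` an isometry, inverting the substitutions
makes it onto, and substituting in the convolution integral `(𝓗 (V f))(x)` at `x = (1 ∓ s)/2`
produces exactly the two block rows of `F_H(s, ·)` applied to `f`, i.e. `√2 (𝓕 f)(s)`.
-/

open Matrix MeasureTheory Set
attribute [local instance] Matrix.normedAddCommGroup Matrix.normedSpace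

theorem Real.map_volume_mul_add {a : ℝ} (ha : a ≠ 0) (b : ℝ) :
    Measure.map (fun x => a * x + b) volume = ENNReal.ofReal |a⁻¹| • volume := by
  change Measure.map ((· + b) ∘ (a * ·)) volume = _
  rw [← Measure.map_map (measurable_add_const b) (measurable_const_mul a),
    Real.map_volume_mul_left ha, Measure.map_smul, map_add_right_eq_self]

theorem Real.map_restrict_mul_add_le {a : ℝ} (ha : a ≠ 0) (b : ℝ) {s t : Set ℝ}
    (ht : MeasurableSet t) (hst : MapsTo (fun x => a * x + b) s t) :
    Measure.map (fun x => a * x + b) (volume.restrict s) ≤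
      ENNReal.ofReal |a⁻¹| • volume.restrict t := by
  have hf : Measurable fun x : ℝ => a * x + b := by fun_prop
  calc Measure.map (fun x => a * x + b) (volume.restrict s)
      ≤ Measure.map (fun x => a * x + b) (volume.restrict ((fun x => a * x + b) ⁻¹' t)) :=
        Measure.map_mono (Measure.restrict_mono hst le_rfl) hf
    _ = ENNReal.ofReal |a⁻¹| • volume.restrict t := by
        rw [← Measure.restrict_map hf ht, Real.map_volume_mul_add ha, Measure.restrict_smul]

theorem Real.quasiMeasurePreserving_restrict_mul_add {a : ℝ} (ha : a ≠ 0) (b : ℝ) {s t : Set ℝ}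
    (ht : MeasurableSet t) (hst : MapsTo (fun x => a * x + b) s t) :
    Measure.QuasiMeasurePreserving (fun x => a * x + b) (volume.restrict s)
      (volume.restrict t) :=
  ⟨by fun_prop, Measure.absolutelyContinuous_of_le_smul (Real.map_restrict_mul_add_le ha b ht hst)⟩

theorem MeasureTheory.MemLp.comp_mul_add {E : Type*} [NormedAddCommGroup E] {p : ENNReal}
    {g : ℝ → E} {s t : Set ℝ} (ht : MeasurableSet t) (hg : MemLp g p (volume.restrict t))
    {a : ℝ} (ha : a ≠ 0) (b : ℝ) (hst : MapsTo (fun x => a * x + b) s t) :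
    MemLp (fun x => g (a * x + b)) p (volume.restrict s) := by
  have hf : MeasurableEmbedding fun x : ℝ => a * x + b :=
    ((Homeomorph.mulLeft₀ a ha).trans (Homeomorph.addRight b)).measurableEmbedding
  exact hf.memLp_map_measure_iff.mp
    ((hg.smul_measure ENNReal.ofReal_ne_top).mono_measure
      (Real.map_restrict_mul_add_le ha b ht hst))

local notation "μ₀₁" => volume.restrict (Set.Ioo (0:ℝ) 1)

theorem MeasureTheory.MemLp.comp_one_sub_div_two {E : Type*} [NormedAddCommGroup E]
    {p : ENNReal} {g : ℝ → E} (hg : MemLp g p μ₀₁) : MemLp (fun s => g ((1 - s) / 2)) p μ₀₁ := by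
  have := hg.comp_mul_add (s := Ioo 0 1) measurableSet_Ioo (a := -2⁻¹) (by norm_num) 2⁻¹
    fun s hs => by simp only [mem_Ioo] at hs ⊢; constructor <;> linarith
  simpa only [show ∀ s : ℝ, -2⁻¹ * s + 2⁻¹ = (1 - s) / 2 from fun s => by ring] using this

theorem MeasureTheory.MemLp.comp_one_add_div_two {E : Type*} [NormedAddCommGroup E]
    {p : ENNReal} {g : ℝ → E} (hg : MemLp g p μ₀₁) : MemLp (fun s => g ((1 + s) / 2)) p μ₀₁ := by
  have := hg.comp_mul_add (s := Ioo 0 1) measurableSet_Ioo (a := 2⁻¹) (by norm_num) 2⁻¹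
    fun s hs => by simp only [mem_Ioo] at hs ⊢; constructor <;> linarith
  simpa only [show ∀ s : ℝ, 2⁻¹ * s + 2⁻¹ = (1 + s) / 2 from fun s => by ring] using this

theorem ae_restrict_Ioo_iff_ae_comp_halves {p : ℝ → Prop} :
    (∀ᵐ t ∂μ₀₁, p t) ↔ (∀ᵐ s ∂μ₀₁, p ((1 - s) / 2)) ∧ ∀ᵐ s ∂μ₀₁, p ((1 + s) / 2) := by
  constructor
  · intro h
    constructor
    · refine ((Real.quasiMeasurePreserving_restrict_mul_add (a := -2⁻¹) (by norm_num) 2⁻¹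
        measurableSet_Ioo fun s hs => ?_).ae h).mono fun s hs => ?_
      · simp only [mem_Ioo] at hs ⊢; constructor <;> linarith
      · rwa [show (1 - s) / 2 = -2⁻¹ * s + 2⁻¹ by ring]
    · refine ((Real.quasiMeasurePreserving_restrict_mul_add (a := 2⁻¹) (by norm_num) 2⁻¹
        measurableSet_Ioo fun s hs => ?_).ae h).mono fun s hs => ?_
      · simp only [mem_Ioo] at hs ⊢; constructor <;> linarith
      · rwa [show (1 + s) / 2 = 2⁻¹ * s + 2⁻¹ by ring]
  · rintro ⟨h₁, h₂⟩
    have hleft : ∀ᵐ t ∂volume.restrict (Ioc (0:ℝ) (1 / 2)), p t := by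
      rw [← Measure.restrict_congr_set Ioo_ae_eq_Ioc]
      refine ((Real.quasiMeasurePreserving_restrict_mul_add (a := -2) (by norm_num) 1
        measurableSet_Ioo fun t ht => ?_).ae h₁).mono fun t ht => ?_
      · simp only [mem_Ioo] at ht ⊢; constructor <;> linarith
      · rwa [show (1 - (-2 * t + 1)) / 2 = t by ring] at ht
    have hright : ∀ᵐ t ∂volume.restrict (Ioo (1 / 2 : ℝ) 1), p t := by
      refine ((Real.quasiMeasurePreserving_restrict_mul_add (a := 2) (by norm_num) (-1)
        measurableSet_Ioo fun t ht => ?_).ae h₂).mono fun t ht => ?_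
      · simp only [mem_Ioo] at ht ⊢; constructor <;> linarith
      · rwa [show (1 + (2 * t + -1)) / 2 = t by ring] at ht
    rw [← Ioc_union_Ioo_eq_Ioo (by norm_num : (0:ℝ) ≤ 1 / 2) (by norm_num : (1 / 2 : ℝ) < 1),
      ae_restrict_union_iff]
    exact ⟨hleft, hright⟩

theorem integral_Ioo_eq_half_integral_comp_halves {E : Type*} [NormedAddCommGroup E]
    [NormedSpace ℝ E] {g : ℝ → E} (hg : IntegrableOn g (Ioo 0 1)) :
    ∫ t in Ioo 0 1, g t = (2:ℝ)⁻¹ • ∫ s in Ioo 0 1, (g ((1 - s) / 2) + g ((1 + s) / 2)) := by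
  have hg' : IntervalIntegrable g volume 0 1 :=
    (intervalIntegrable_iff_integrableOn_Ioo_of_le zero_le_one).2 hg
  have hsub : ∫ s in Ioo 0 1, g ((1 - s) / 2) = (2:ℝ) • ∫ t in (0:ℝ)..1 / 2, g t := by
    rw [← integral_Ioc_eq_integral_Ioo, ← intervalIntegral.integral_of_le zero_le_one]
    simp only [sub_div]
    rw [intervalIntegral.integral_comp_sub_div g two_ne_zero]
    norm_num
  have hadd : ∫ s in Ioo 0 1, g ((1 + s) / 2) = (2:ℝ) • ∫ t in (1 / 2 : ℝ)..1, g t := by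
    rw [← integral_Ioc_eq_integral_Ioo, ← intervalIntegral.integral_of_le zero_le_one]
    simp only [add_div, add_comm (1 / 2 : ℝ)]
    rw [intervalIntegral.integral_comp_div_add g two_ne_zero]
    norm_num
  have hg₁ : MemLp g 1 μ₀₁ := memLp_one_iff_integrable.2 hg
  rw [integral_add (memLp_one_iff_integrable.1 hg₁.comp_one_sub_div_two)
    (memLp_one_iff_integrable.1 hg₁.comp_one_add_div_two), hsub, hadd, ← smul_add, smul_smul,
    inv_mul_cancel₀ two_ne_zero, one_smul, intervalIntegral.integral_add_adjacent_intervals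
      (hg'.mono_set (uIcc_subset_uIcc (by norm_num [mem_uIcc]) (by norm_num [mem_uIcc])))
      (hg'.mono_set (uIcc_subset_uIcc (by norm_num [mem_uIcc]) (by norm_num [mem_uIcc]))),
    intervalIntegral.integral_of_le zero_le_one, integral_Ioc_eq_integral_Ioo]

theorem MeasureTheory.L2.norm_sq_eq_integral_norm_sq {α 𝕜 E : Type*} [MeasurableSpace α]
    {μ : Measure α} [RCLike 𝕜] [NormedAddCommGroup E] [InnerProductSpace 𝕜 E] (f : Lp E 2 μ) :
    ‖f‖ ^ 2 = ∫ a, ‖f a‖ ^ 2 ∂μ := by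
  rw [← inner_self_eq_norm_sq (𝕜 := 𝕜), L2.inner_def, ← integral_re (L2.integrable_inner f f)]
  simp only [inner_self_eq_norm_sq]

theorem MeasureTheory.MemLp.integrable_mulVec_apply {α 𝕜 m n : Type*} [MeasurableSpace α]
    {μ : Measure α} [RCLike 𝕜] [Fintype m] [Fintype n] {M : α → Matrix m n 𝕜}
    {v : α → EuclideanSpace 𝕜 n} (hM : MemLp M 2 μ) (hv : MemLp v 2 μ) (i : m) :
    Integrable (fun a => (M a *ᵥ v a) i) μ :=
  integrable_finsetSum _ fun j _ =>
    ((hM.eval i).eval j).integrable_mul ((EuclideanSpace.proj (𝕜 := 𝕜) j).comp_memLp' hv)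

local notation "L²[" κ "]" => Lp (EuclideanSpace ℂ κ) 2 μ₀₁

def HasMatrixKernel {κ : Type*} [Fintype κ] (T : L²[κ] → L²[κ])
    (K : ℝ → ℝ → Matrix κ κ ℂ) : Prop :=
  ∀ g, ∀ᵐ x ∂μ₀₁, ∀ i, (T g : ℝ → EuclideanSpace ℂ κ) x i =
    ∫ t in Set.Ioo (0:ℝ) 1, (K x t *ᵥ (g : ℝ → EuclideanSpace ℂ κ) t) i

variable {ι : Type*} [Fintype ι]

def IsHalfUnfolding (V : L²[ι ⊕ ι] → L²[ι]) : Prop :=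
  ∀ f, ∀ᵐ t ∂μ₀₁, ∀ i, (V f : ℝ → EuclideanSpace ℂ ι) t i =
    if t ≤ 1 / 2 then
      (Real.sqrt 2 : ℂ) * (f : ℝ → EuclideanSpace ℂ (ι ⊕ ι)) (1 - 2 * t) (Sum.inr i)
    else
      (Real.sqrt 2 : ℂ) * (f : ℝ → EuclideanSpace ℂ (ι ⊕ ι)) (2 * t - 1) (Sum.inl i)

noncomputable def blockKernel (H : ℝ → Matrix ι ι ℂ) (x t : ℝ) : Matrix (ι ⊕ ι) (ι ⊕ ι) ℂ :=
  (1 / 2 : ℂ) • fromBlocks (H ((x - t) / 2)) (H ((x + t) / 2))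
    (H (-((x + t) / 2))) (H (-((x - t) / 2)))

theorem blockKernel_mulVec_inl (H : ℝ → Matrix ι ι ℂ) (x t : ℝ) (v : ι ⊕ ι → ℂ) (i : ι) :
    (blockKernel H x t *ᵥ v) (Sum.inl i) =
      2⁻¹ * ((H ((x - t) / 2) *ᵥ (v ∘ Sum.inl)) i + (H ((x + t) / 2) *ᵥ (v ∘ Sum.inr)) i) := by
  simp [blockKernel, smul_mulVec, fromBlocks_mulVec]

theorem blockKernel_mulVec_inr (H : ℝ → Matrix ι ι ℂ) (x t : ℝ) (v : ι ⊕ ι → ℂ) (i : ι) :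
    (blockKernel H x t *ᵥ v) (Sum.inr i) =
      2⁻¹ * ((H (-((x + t) / 2)) *ᵥ (v ∘ Sum.inl)) i +
        (H (-((x - t) / 2)) *ᵥ (v ∘ Sum.inr)) i) := by
  simp [blockKernel, smul_mulVec, fromBlocks_mulVec]

namespace IsHalfUnfolding

variable {V : L²[ι ⊕ ι] → L²[ι]}

theorem ae_comp_halves (hV : IsHalfUnfolding V) (f : L²[ι ⊕ ι]) :
    ∀ᵐ s ∂μ₀₁, ∀ i, V f ((1 - s) / 2) i = Real.sqrt 2 * f s (Sum.inr i) ∧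
      V f ((1 + s) / 2) i = Real.sqrt 2 * f s (Sum.inl i) := by
  obtain ⟨h₁, h₂⟩ := ae_restrict_Ioo_iff_ae_comp_halves.1 (hV f)
  filter_upwards [h₁, h₂, ae_restrict_mem measurableSet_Ioo] with s hs₁ hs₂ hs i
  have hle : (1 - s) / 2 ≤ 1 / 2 := by linarith [hs.1]
  have hgt : ¬ (1 + s) / 2 ≤ 1 / 2 := by linarith [hs.1]
  rw [hs₁ i, hs₂ i, if_pos hle, if_neg hgt, show 1 - 2 * ((1 - s) / 2) = s by ring,
    show 2 * ((1 + s) / 2) - 1 = s by ring]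
  exact ⟨rfl, rfl⟩

theorem norm_map (hV : IsHalfUnfolding V) (f : L²[ι ⊕ ι]) : ‖V f‖ = ‖f‖ := by
  have hpt : ∀ᵐ s ∂μ₀₁, ‖V f ((1 - s) / 2)‖ ^ 2 + ‖V f ((1 + s) / 2)‖ ^ 2 = 2 * ‖f s‖ ^ 2 := by
    filter_upwards [hV.ae_comp_halves f] with s hs
    simp only [EuclideanSpace.norm_sq_eq, Fintype.sum_sum_type, (hs _).1, (hs _).2,
      Complex.norm_mul, Complex.norm_real, Real.norm_eq_abs, mul_pow, sq_abs,
      Real.sq_sqrt zero_le_two, ← Finset.mul_sum]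
    ring
  have hint : IntegrableOn (fun t => ‖V f t‖ ^ 2) (Ioo 0 1) :=
    (memLp_two_iff_integrable_sq_norm (Lp.aestronglyMeasurable _)).1 (Lp.memLp _)
  have hsq : ‖V f‖ ^ 2 = ‖f‖ ^ 2 := by
    rw [L2.norm_sq_eq_integral_norm_sq (𝕜 := ℂ), L2.norm_sq_eq_integral_norm_sq (𝕜 := ℂ),
      integral_Ioo_eq_half_integral_comp_halves hint, integral_congr_ae hpt, integral_const_mul,
      smul_eq_mul, ← mul_assoc, inv_mul_cancel₀ two_ne_zero, one_mul]
  exact (sq_eq_sq₀ (norm_nonneg _) (norm_nonneg _)).1 hsq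

theorem surjective (hV : IsHalfUnfolding V) : Function.Surjective V := by
  intro g
  set c : ℂ := (Real.sqrt 2 : ℂ)⁻¹
  have hpair : MemLp (fun s => (c • g ((1 + s) / 2), c • g ((1 - s) / 2))) 2 μ₀₁ :=
    memLp_prod_iff.2 ⟨(Lp.memLp g).comp_one_add_div_two.const_smul c,
      (Lp.memLp g).comp_one_sub_div_two.const_smul c⟩
  have hφ := (EuclideanSpace.sumEquivProd (𝕜 := ℂ) (ι := ι) (κ := ι)).symm.toContinuousLinearMap
    |>.comp_memLp' hpair
  have hc : (Real.sqrt 2 : ℂ) * c = 1 := mul_inv_cancel₀ (by simp)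
  refine ⟨hφ.toLp _, Lp.ext (ae_restrict_Ioo_iff_ae_comp_halves.2 ⟨?_, ?_⟩)⟩
  · filter_upwards [hV.ae_comp_halves (hφ.toLp _), hφ.coeFn_toLp] with s hs hφs
    ext i
    rw [(hs i).1, hφs]
    simp [← mul_assoc, hc]
  · filter_upwards [hV.ae_comp_halves (hφ.toLp _), hφ.coeFn_toLp] with s hs hφs
    ext i
    rw [(hs i).2, hφs]
    simp [← mul_assoc, hc]

theorem integral_mulVec_sub_eq {H : ℝ → Matrix ι ι ℂ}
    (hH : MemLp H 2 (volume.restrict (Ioo (-1) 1))) (hV : IsHalfUnfolding V) (f : L²[ι ⊕ ι])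
    {x : ℝ} (hx : x ∈ Ioo 0 1) (i : ι) :
    ∫ t in Ioo 0 1, (H (x - t) *ᵥ V f t) i = Real.sqrt 2 * 2⁻¹ *
      ∫ s in Ioo 0 1, ((H (x - (1 - s) / 2) *ᵥ fun j => f s (Sum.inr j)) i +
        (H (x - (1 + s) / 2) *ᵥ fun j => f s (Sum.inl j)) i) := by
  have hHx := hH.comp_mul_add (s := Ioo 0 1) measurableSet_Ioo (a := -1) (by norm_num) x
    fun t ht => by simp only [mem_Ioo] at ht hx ⊢; constructor <;> linarith
  simp only [neg_one_mul, neg_add_eq_sub] at hHx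
  have hhalves : ∀ᵐ s ∂μ₀₁, (H (x - (1 - s) / 2) *ᵥ V f ((1 - s) / 2)) i +
      (H (x - (1 + s) / 2) *ᵥ V f ((1 + s) / 2)) i =
      Real.sqrt 2 * ((H (x - (1 - s) / 2) *ᵥ fun j => f s (Sum.inr j)) i +
        (H (x - (1 + s) / 2) *ᵥ fun j => f s (Sum.inl j)) i) := by
    filter_upwards [hV.ae_comp_halves f] with s hs
    have hsub : (V f ((1 - s) / 2) : ι → ℂ) = (Real.sqrt 2 : ℂ) • fun j => f s (Sum.inr j) :=
      funext fun j => (hs j).1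
    have hadd : (V f ((1 + s) / 2) : ι → ℂ) = (Real.sqrt 2 : ℂ) • fun j => f s (Sum.inl j) :=
      funext fun j => (hs j).2
    simp only [hsub, hadd, mulVec_smul, Pi.smul_apply, smul_eq_mul, mul_add]
  rw [integral_Ioo_eq_half_integral_comp_halves (hHx.integrable_mulVec_apply (Lp.memLp _) i),
    integral_congr_ae hhalves, integral_const_mul, Complex.real_smul]
  push_cast
  ring

theorem kernel_comp_eq_comp_blockKernel {H : ℝ → Matrix ι ι ℂ}
    (hH : MemLp H 2 (volume.restrict (Ioo (-1) 1))) {𝓗 : L²[ι] → L²[ι]}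
    {𝓕 : L²[ι ⊕ ι] → L²[ι ⊕ ι]} (h𝓗 : HasMatrixKernel 𝓗 fun x t => H (x - t))
    (h𝓕 : HasMatrixKernel 𝓕 (blockKernel H)) (hV : IsHalfUnfolding V) (f : L²[ι ⊕ ι]) :
    𝓗 (V f) = V (𝓕 f) := by
  obtain ⟨h𝓗₁, h𝓗₂⟩ := ae_restrict_Ioo_iff_ae_comp_halves.1 (h𝓗 (V f))
  refine Lp.ext (ae_restrict_Ioo_iff_ae_comp_halves.2 ⟨?_, ?_⟩)
  · filter_upwards [h𝓗₁, h𝓕 f, hV.ae_comp_halves (𝓕 f), ae_restrict_mem measurableSet_Ioo]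
      with s h𝓗s h𝓕s hVs hs
    ext i
    rw [h𝓗s i, integral_mulVec_sub_eq hH hV f ⟨by linarith [hs.2], by linarith [hs.1]⟩,
      (hVs i).1, h𝓕s (Sum.inr i), mul_assoc, ← integral_const_mul]
    refine congrArg _ (integral_congr_ae (.of_forall fun u => ?_))
    beta_reduce
    rw [blockKernel_mulVec_inr, show (1 - s) / 2 - (1 - u) / 2 = -((s - u) / 2) by ring,
      show (1 - s) / 2 - (1 + u) / 2 = -((s + u) / 2) by ring, add_comm]
    rfl
  · filter_upwards [h𝓗₂, h𝓕 f, hV.ae_comp_halves (𝓕 f), ae_restrict_mem measurableSet_Ioo]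
      with s h𝓗s h𝓕s hVs hs
    ext i
    rw [h𝓗s i, integral_mulVec_sub_eq hH hV f ⟨by linarith [hs.1], by linarith [hs.2]⟩,
      (hVs i).2, h𝓕s (Sum.inl i), mul_assoc, ← integral_const_mul]
    refine congrArg _ (integral_congr_ae (.of_forall fun u => ?_))
    beta_reduce
    rw [blockKernel_mulVec_inl, show (1 + s) / 2 - (1 - u) / 2 = (s + u) / 2 by ring,
      show (1 + s) / 2 - (1 + u) / 2 = (s - u) / 2 by ring, add_comm]
    rfl

end IsHalfUnfolding

theorem block_kernel_unitary_equivalence_general (r : ℕ)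
    (H : ℝ → Matrix (Fin r) (Fin r) ℂ)
    (hH : MemLp H 2 (volume.restrict (Set.Ioo (-1:ℝ) 1)))
    (F : ℝ → ℝ → Matrix (Fin r ⊕ Fin r) (Fin r ⊕ Fin r) ℂ)
    (hF : ∀ x t, F x t = (1/2 : ℂ) •
      Matrix.fromBlocks (H ((x - t)/2)) (H ((x + t)/2))
        (H (-((x + t)/2))) (H (-((x - t)/2))))
    (𝓕 : Lp (EuclideanSpace ℂ (Fin r ⊕ Fin r)) 2 (volume.restrict (Set.Ioo (0:ℝ) 1)) →L[ℂ]
         Lp (EuclideanSpace ℂ (Fin r ⊕ Fin r)) 2 (volume.restrict (Set.Ioo (0:ℝ) 1)))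
    (h𝓕 : ∀ f, ∀ᵐ x ∂(volume.restrict (Set.Ioo (0:ℝ) 1)), ∀ i,
      (𝓕 f : ℝ → EuclideanSpace ℂ (Fin r ⊕ Fin r)) x i =
        ∫ s in Set.Ioo (0:ℝ) 1,
          ((F x s).mulVec ((f : ℝ → EuclideanSpace ℂ (Fin r ⊕ Fin r)) s)) i)
    (𝓗 : Lp (EuclideanSpace ℂ (Fin r)) 2 (volume.restrict (Set.Ioo (0:ℝ) 1)) →L[ℂ]
         Lp (EuclideanSpace ℂ (Fin r)) 2 (volume.restrict (Set.Ioo (0:ℝ) 1)))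
    (h𝓗 : ∀ g, ∀ᵐ x ∂(volume.restrict (Set.Ioo (0:ℝ) 1)), ∀ i,
      (𝓗 g : ℝ → EuclideanSpace ℂ (Fin r)) x i =
        ∫ t in Set.Ioo (0:ℝ) 1,
          ((H (x - t)).mulVec ((g : ℝ → EuclideanSpace ℂ (Fin r)) t)) i)
    (V : Lp (EuclideanSpace ℂ (Fin r ⊕ Fin r)) 2 (volume.restrict (Set.Ioo (0:ℝ) 1)) →L[ℂ]
         Lp (EuclideanSpace ℂ (Fin r)) 2 (volume.restrict (Set.Ioo (0:ℝ) 1)))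
    (hV : ∀ f, ∀ᵐ t ∂(volume.restrict (Set.Ioo (0:ℝ) 1)), ∀ i,
      (V f : ℝ → EuclideanSpace ℂ (Fin r)) t i =
        if t ≤ 1/2 then
          (Real.sqrt 2 : ℂ) *
            (f : ℝ → EuclideanSpace ℂ (Fin r ⊕ Fin r)) (1 - 2*t) (Sum.inr i)
        else
          (Real.sqrt 2 : ℂ) *
            (f : ℝ → EuclideanSpace ℂ (Fin r ⊕ Fin r)) (2*t - 1) (Sum.inl i)) :
    (∀ f, ‖V f‖ = ‖f‖) ∧ Function.Bijective V ∧
      ∀ f, (1 + 𝓗) (V f) = V ((1 + 𝓕) f) := by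
  obtain rfl : F = blockKernel H := funext₂ hF
  have hunfold : IsHalfUnfolding V := hV
  refine ⟨hunfold.norm_map, ⟨(AddMonoidHomClass.isometry_of_norm V hunfold.norm_map).injective,
    hunfold.surjective⟩, fun f => ?_⟩
  simp only [_root_.add_apply, one_apply_eq_self, map_add,
    hunfold.kernel_comp_eq_comp_blockKernel hH h𝓗 h𝓕 f]

/-- Let `H ∈ L²((−1,1), M_r(ℂ))` with `H(−x) = H(x)*` a.e., `F_H` the block kernel
`(1/2)[[H((x−t)/2), H((x+t)/2)],[H^♯((x+t)/2), H^♯((x−t)/2)]]`, `𝓕_H` the corresponding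
integral operator on `L²((0,1), ℂ^{2r})` and `𝓗` the integral operator on
`L²((0,1), ℂ^r)` with kernel `H(x−t)`. Then `V`, defined by `(Vf)(t) = √2 f₂(1−2t)` for
`t ≤ 1/2` and `(Vf)(t) = √2 f₁(2t−1)` for `t > 1/2`, is unitary and
`I + 𝓗 = V (I + 𝓕_H) V⁻¹`. -/
theorem block_kernel_unitary_equivalence (r : ℕ)
    (H : ℝ → Matrix (Fin r) (Fin r) ℂ)
    (hH : MemLp H 2 (volume.restrict (Set.Ioo (-1:ℝ) 1)))
    (hHsym : ∀ᵐ x ∂(volume.restrict (Set.Ioo (-1:ℝ) 1)), H (-x) = (H x)ᴴ)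
    (F : ℝ → ℝ → Matrix (Fin r ⊕ Fin r) (Fin r ⊕ Fin r) ℂ)
    (hF : ∀ x t, F x t = (1/2 : ℂ) •
      Matrix.fromBlocks (H ((x - t)/2)) (H ((x + t)/2))
        (H (-((x + t)/2))) (H (-((x - t)/2))))
    (𝓕 : Lp (EuclideanSpace ℂ (Fin r ⊕ Fin r)) 2 (volume.restrict (Set.Ioo (0:ℝ) 1)) →L[ℂ]
         Lp (EuclideanSpace ℂ (Fin r ⊕ Fin r)) 2 (volume.restrict (Set.Ioo (0:ℝ) 1)))
    (h𝓕 : ∀ f, ∀ᵐ x ∂(volume.restrict (Set.Ioo (0:ℝ) 1)), ∀ i,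
      (𝓕 f : ℝ → EuclideanSpace ℂ (Fin r ⊕ Fin r)) x i =
        ∫ s in Set.Ioo (0:ℝ) 1,
          ((F x s).mulVec ((f : ℝ → EuclideanSpace ℂ (Fin r ⊕ Fin r)) s)) i)
    (𝓗 : Lp (EuclideanSpace ℂ (Fin r)) 2 (volume.restrict (Set.Ioo (0:ℝ) 1)) →L[ℂ]
         Lp (EuclideanSpace ℂ (Fin r)) 2 (volume.restrict (Set.Ioo (0:ℝ) 1)))
    (h𝓗 : ∀ g, ∀ᵐ x ∂(volume.restrict (Set.Ioo (0:ℝ) 1)), ∀ i,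
      (𝓗 g : ℝ → EuclideanSpace ℂ (Fin r)) x i =
        ∫ t in Set.Ioo (0:ℝ) 1,
          ((H (x - t)).mulVec ((g : ℝ → EuclideanSpace ℂ (Fin r)) t)) i)
    (V : Lp (EuclideanSpace ℂ (Fin r ⊕ Fin r)) 2 (volume.restrict (Set.Ioo (0:ℝ) 1)) →L[ℂ]
         Lp (EuclideanSpace ℂ (Fin r)) 2 (volume.restrict (Set.Ioo (0:ℝ) 1)))
    (hV : ∀ f, ∀ᵐ t ∂(volume.restrict (Set.Ioo (0:ℝ) 1)), ∀ i,
      (V f : ℝ → EuclideanSpace ℂ (Fin r)) t i =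
        if t ≤ 1/2 then
          (Real.sqrt 2 : ℂ) *
            (f : ℝ → EuclideanSpace ℂ (Fin r ⊕ Fin r)) (1 - 2*t) (Sum.inr i)
        else
          (Real.sqrt 2 : ℂ) *
            (f : ℝ → EuclideanSpace ℂ (Fin r ⊕ Fin r)) (2*t - 1) (Sum.inl i)) :
    (∀ f, ‖V f‖ = ‖f‖) ∧ Function.Bijective V ∧
      ∀ f, (1 + 𝓗) (V f) = V ((1 + 𝓕) f) :=
  block_kernel_unitary_equivalence_general r H hH F hF 𝓕 h𝓕 𝓗 h𝓗 V hV
end
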